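/- arXiv:1910.04809 — 2 statements merged into one kernel-verified Lean document; each statement's English description precedes it below -/
import Mathlib

section
/- Let γ : [a,b] → ℝ^n be a C^1 curve, and let W, V be sets with W compactly contained in the open set V, γ(a), γ(b) ∈ W, and the image of γ not contained in V. Then the total arc length of the portion of γ lying in V is at least 2·dist(W, ℝ^n ∖ V). -/
/-!
Let `t₀` and `t₁` be the first and the last time at which `γ` lies outside `V`. On `[a, t₀)` and
on `(t₁, b]` the curve stays in `V`, and these two stretches are disjoint. The length of each is at
least the displacement from an endpoint in `W` to a point of `Vᶜ`, hence at least `dist(W, Vᶜ)`.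
-/

open Classical

open Set MeasureTheory Metric

theorem exists_first_last_mem_compl {X : Type*} [TopologicalSpace X] {V : Set X} {γ : ℝ → X}
    {a b : ℝ} (hγ : ContinuousOn γ (Icc a b)) (hV : IsOpen V) (hout : ∃ t ∈ Icc a b, γ t ∉ V) :
    ∃ t₀ t₁, a ≤ t₀ ∧ t₀ ≤ t₁ ∧ t₁ ≤ b ∧ γ t₀ ∉ V ∧ γ t₁ ∉ V ∧
      Ico a t₀ ⊆ γ ⁻¹' V ∧ Ioc t₁ b ⊆ γ ⁻¹' V := by
  set K := Icc a b ∩ γ ⁻¹' Vᶜ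
  have hK : IsCompact K :=
    isCompact_Icc.of_isClosed_subset
      (hγ.preimage_isClosed_of_isClosed isClosed_Icc hV.isClosed_compl) inter_subset_left
  obtain ⟨t₀, ht₀, hfirst⟩ := hK.exists_isLeast hout
  obtain ⟨t₁, ht₁, hlast⟩ := hK.exists_isGreatest hout
  have ht₀₁ : t₀ ≤ t₁ := hfirst ht₁
  refine ⟨t₀, t₁, ht₀.1.1, ht₀₁, ht₁.1.2, ht₀.2, ht₁.2, ?_, ?_⟩
  · rintro t ⟨hat, htt₀⟩
    by_contra htV
    exact (hfirst ⟨⟨hat, by linarith [ht₁.1.2]⟩, htV⟩).not_gt htt₀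
  · rintro t ⟨ht₁t, htb⟩
    by_contra htV
    exact (hlast ⟨⟨by linarith [ht₀.1.1], htb⟩, htV⟩).not_gt ht₁t

variable {E : Type*} [NormedAddCommGroup E] [NormedSpace ℝ E] {γ γ' : ℝ → E} {a b : ℝ}

theorem dist_le_intervalIntegral_norm_of_hasDerivAt (hab : a ≤ b)
    (hγ : ∀ t ∈ Icc a b, HasDerivAt γ (γ' t) t) (hγ' : ContinuousOn γ' (Icc a b)) :
    dist (γ a) (γ b) ≤ ∫ t in a..b, ‖γ' t‖ := by
  rw [dist_comm, dist_eq_norm]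
  refine norm_sub_le_integral_of_norm_deriv_le_of_le hab (HasDerivAt.continuousOn hγ)
    (fun t ht ↦ (hγ t (Ioo_subset_Icc_self ht)).differentiableAt.differentiableWithinAt)
    (ae_of_all _ fun t ht ↦ ?_) (hγ'.norm.intervalIntegrable_of_Icc hab)
  rw [(hγ t (Ioo_subset_Icc_self ht)).deriv]

theorem infDist_add_infDist_compl_le_setIntegral_norm_deriv {V : Set E} (hV : IsOpen V)
    (hγ : ∀ t ∈ Icc a b, HasDerivAt γ (γ' t) t) (hγ' : ContinuousOn γ' (Icc a b))
    (hout : ∃ t ∈ Icc a b, γ t ∉ V) :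
    infDist (γ a) Vᶜ + infDist (γ b) Vᶜ ≤ ∫ t in Icc a b ∩ γ ⁻¹' V, ‖γ' t‖ := by
  obtain ⟨t₀, t₁, hat₀, ht₀₁, ht₁b, ht₀V, ht₁V, hfirst, hlast⟩ :=
    exists_first_last_mem_compl (HasDerivAt.continuousOn hγ) hV hout
  have hint : IntegrableOn (‖γ' ·‖) (Icc a b) := hγ'.norm.integrableOn_Icc
  have hIco : Ico a t₀ ⊆ Icc a b := Ico_subset_Icc_self.trans (Icc_subset_Icc_right (by linarith))
  have hIoc : Ioc t₁ b ⊆ Icc a b := Ioc_subset_Icc_self.trans (Icc_subset_Icc_left (by linarith))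
  have hlen₀ := dist_le_intervalIntegral_norm_of_hasDerivAt hat₀
    (fun t ht ↦ hγ t ⟨ht.1, by linarith [ht.2]⟩) (hγ'.mono (Icc_subset_Icc_right (by linarith)))
  have hlen₁ := dist_le_intervalIntegral_norm_of_hasDerivAt ht₁b
    (fun t ht ↦ hγ t ⟨by linarith [ht.1], ht.2⟩) (hγ'.mono (Icc_subset_Icc_left (by linarith)))
  rw [intervalIntegral.integral_of_le hat₀, ← integral_Ico_eq_integral_Ioc] at hlen₀
  rw [intervalIntegral.integral_of_le ht₁b] at hlen₁
  calc infDist (γ a) Vᶜ + infDist (γ b) Vᶜ ≤ dist (γ a) (γ t₀) + dist (γ t₁) (γ b) := by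
        rw [dist_comm (γ t₁)]
        exact add_le_add (infDist_le_dist_of_mem ht₀V) (infDist_le_dist_of_mem ht₁V)
    _ ≤ (∫ t in Ico a t₀, ‖γ' t‖) + ∫ t in Ioc t₁ b, ‖γ' t‖ := add_le_add hlen₀ hlen₁
    _ = ∫ t in Ico a t₀ ∪ Ioc t₁ b, ‖γ' t‖ := by
        refine (setIntegral_union (disjoint_left.2 fun t h₀ h₁ ↦ ?_) measurableSet_Ioc
          (hint.mono_set hIco) (hint.mono_set hIoc)).symm
        linarith [h₀.2, h₁.1]
    _ ≤ ∫ t in Icc a b ∩ γ ⁻¹' V, ‖γ' t‖ := by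
        exact setIntegral_mono_set (hint.mono_set inter_subset_left)
          (ae_of_all _ fun t ↦ norm_nonneg _)
          (union_subset (subset_inter hIco hfirst) (subset_inter hIoc hlast)).eventuallyLE

theorem setIntegral_ite_mem_preimage {α β F : Type*} [MeasurableSpace α] [NormedAddCommGroup F]
    [NormedSpace ℝ F] {μ : Measure α} {s : Set α} {f : α → β} {V : Set β} {g : α → F}
    (hs : MeasurableSet s) (hsV : MeasurableSet (s ∩ f ⁻¹' V)) :
    ∫ x in s, (if f x ∈ V then g x else 0) ∂μ = ∫ x in s ∩ f ⁻¹' V, g x ∂μ := by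
  calc ∫ x in s, (if f x ∈ V then g x else 0) ∂μ
      = ∫ x in s, (s ∩ f ⁻¹' V).indicator g x ∂μ :=
        setIntegral_congr_fun hs fun x hx ↦ by by_cases hxV : f x ∈ V <;> simp [hx, hxV]
    _ = ∫ x in s ∩ f ⁻¹' V, g x ∂μ := by rw [setIntegral_indicator hsV, ← inter_assoc, inter_self]

theorem sInf_image2_dist_le_infDist {X : Type*} [PseudoMetricSpace X] {W T : Set X} {x : X}
    (hx : x ∈ W) (hT : T.Nonempty) : sInf (image2 dist W T) ≤ infDist x T :=
  (le_infDist hT).2 fun _ hy ↦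
    csInf_le ⟨0, by rintro _ ⟨_, -, _, -, rfl⟩; exact dist_nonneg⟩ (mem_image2_of_mem hx hy)

theorem stmt_9_general {n : ℕ} (V W : Set (EuclideanSpace ℝ (Fin n)))
    (hV : IsOpen V)
    (a b : ℝ)
    (γ : ℝ → EuclideanSpace ℝ (Fin n)) (γ' : ℝ → EuclideanSpace ℝ (Fin n))
    (hγ : ∀ t ∈ Icc a b, HasDerivAt γ (γ' t) t) (hγ' : ContinuousOn γ' (Icc a b))
    (ha : γ a ∈ W) (hb : γ b ∈ W)
    (hout : ¬ γ '' Icc a b ⊆ V) :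
    2 * sInf (Set.image2 dist W Vᶜ)
      ≤ ∫ t in Icc a b, (if γ t ∈ V then ‖γ' t‖ else 0) := by
  obtain ⟨t, ht, htV⟩ : ∃ t ∈ Icc a b, γ t ∉ V := by
    rwa [image_subset_iff, not_subset] at hout
  have hVc : Vᶜ.Nonempty := ⟨γ t, htV⟩
  have hmeas : MeasurableSet (Icc a b ∩ γ ⁻¹' V) := by
    have hclosed := (HasDerivAt.continuousOn hγ).preimage_isClosed_of_isClosed isClosed_Icc
      hV.isClosed_compl
    rw [← compl_compl V, preimage_compl, ← sdiff_eq, ← sdiff_self_inter]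
    exact measurableSet_Icc.diff hclosed.measurableSet
  rw [setIntegral_ite_mem_preimage measurableSet_Icc hmeas]
  linarith [sInf_image2_dist_le_infDist ha hVc, sInf_image2_dist_le_infDist hb hVc,
    infDist_add_infDist_compl_le_setIntegral_norm_deriv hV hγ hγ' ⟨t, ht, htV⟩]

/-- if a C¹ curve starts and ends in `W ⋐ V` and leaves `V`, then the arc length
of its portion inside `V` is at least twice the distance from `W` to the complement of `V`. -/
theorem stmt_9 {n : ℕ} (V W : Set (EuclideanSpace ℝ (Fin n)))
    (hV : IsOpen V) (hW : closure W ⊆ V) (hWc : IsCompact (closure W))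
    (a b : ℝ) (hab : a ≤ b)
    (γ : ℝ → EuclideanSpace ℝ (Fin n)) (γ' : ℝ → EuclideanSpace ℝ (Fin n))
    (hγ : ∀ t ∈ Icc a b, HasDerivAt γ (γ' t) t) (hγ' : ContinuousOn γ' (Icc a b))
    (ha : γ a ∈ W) (hb : γ b ∈ W)
    (hout : ¬ γ '' Icc a b ⊆ V) :
    2 * sInf (Set.image2 dist W Vᶜ)
      ≤ ∫ t in Icc a b, (if γ t ∈ V then ‖γ' t‖ else 0) :=
  stmt_9_general V W hV a b γ γ' hγ hγ' ha hb hout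
end

section
/- Let U be an open subset of Ω and suppose no integral curve of the vector field X connects any point of U to ∂Ω (i.e., Σ_U ∩ ∂Ω = ∅, where Σ_U is the union of all integral curves of X meeting U). Then Σ_U ⊆ Ω and Σ_U is invariant under the flow of X for all time; i.e., every maximal integral curve starting in Σ_U stays in Σ_U and is defined for all t ∈ ℝ. -/
/-!
A Lipschitz field on `closure Ω` extends to a globally Lipschitz field `Y` on `ℝⁿ`, whose
integral curves exist for all time and are unique. Let `γ` be the `Y`-curve through `x ∈ Σ_U`;
by uniqueness it contains the curve witnessing `x ∈ Σ_U`, so `γ t ∈ Σ_U` as soon as `γ` stays in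
`closure Ω` between times `0` and `t`. Since `Σ_U ⊆ closure Ω` misses `∂Ω`, it lies in the interior
of `Ω`; hence `γ` can never reach `∂Ω`, so it stays in `Σ_U` forever, where `Y = X`.
-/

open Set

/-- `relOf F K x y`: some integral curve of the vector field `F`, staying in `K`, contains both
`x` and `y` in its image. -/
def relOf {n : ℕ} (F : EuclideanSpace ℝ (Fin n) → EuclideanSpace ℝ (Fin n))
    (K : Set (EuclideanSpace ℝ (Fin n))) (x y : EuclideanSpace ℝ (Fin n)) : Prop :=
  ∃ (b : ℝ) (γ : ℝ → EuclideanSpace ℝ (Fin n)), 0 ≤ b ∧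
    (∀ t ∈ Icc (0:ℝ) b, γ t ∈ K ∧ HasDerivAt γ (F (γ t)) t) ∧
    x ∈ γ '' Icc (0:ℝ) b ∧ y ∈ γ '' Icc (0:ℝ) b

/-- The union of integral curves of `F` (staying in `K`) meeting `A`. -/
def SigmaOf {n : ℕ} (F : EuclideanSpace ℝ (Fin n) → EuclideanSpace ℝ (Fin n))
    (K A : Set (EuclideanSpace ℝ (Fin n))) : Set (EuclideanSpace ℝ (Fin n)) :=
  {y | ∃ x ∈ A, relOf F K y x}

open Filter
open scoped NNReal

section LipschitzODE

variable {E : Type*} [NormedAddCommGroup E] [NormedSpace ℝ E] {v : E → E} {K : ℝ≥0}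

theorem exists_hasDerivAt_Ioo_of_lipschitzWith [CompleteSpace E] (hv : LipschitzWith K v)
    {ε : ℝ} (hε : 0 < ε) (hKε : K * ε ≤ 1 / 2) (t₀ : ℝ) (x₀ : E) :
    ∃ f : ℝ → E, f t₀ = x₀ ∧ ∀ t ∈ Ioo (t₀ - ε) (t₀ + ε), HasDerivAt f (v (f t)) t := by
  -- `K ε ≤ 1 / 2` bounds the field by `2 ‖v x₀‖` on the ball of radius `2 ε ‖v x₀‖`, which a
  -- solution cannot leave within time `ε`
  have hpl : IsPicardLindelof (fun _ ↦ v) (tmin := t₀ - ε) (tmax := t₀ + ε)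
      ⟨t₀, by constructor <;> linarith⟩ x₀ ⟨2 * ε * ‖v x₀‖, by positivity⟩ 0
      ⟨2 * ‖v x₀‖, by positivity⟩ K := by
    refine .of_time_independent (fun x hx ↦ ?_) hv.lipschitzOnWith ?_
    · have hx : dist x x₀ ≤ 2 * ε * ‖v x₀‖ := hx
      calc ‖v x‖ ≤ ‖v x₀‖ + K * dist x x₀ := by
            linarith [norm_le_norm_add_norm_sub' (v x) (v x₀), hv.dist_le_mul x x₀,
              dist_eq_norm (v x) (v x₀)]
        _ ≤ ‖v x₀‖ + K * (2 * ε * ‖v x₀‖) := by gcongr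
        _ ≤ 2 * ‖v x₀‖ := by nlinarith [norm_nonneg (v x₀)]
    · change 2 * ‖v x₀‖ * max (t₀ + ε - t₀) (t₀ - (t₀ - ε)) ≤ 2 * ε * ‖v x₀‖ - 0
      rw [add_sub_cancel_left, sub_sub_cancel, max_self]
      linarith
  obtain ⟨f, hf₀, hf⟩ := hpl.exists_eq_forall_mem_Icc_hasDerivWithinAt₀
  exact ⟨f, hf₀, fun t ht ↦ (hf t (Ioo_subset_Icc_self ht)).hasDerivAt (Icc_mem_nhds ht.1 ht.2)⟩

theorem eqOn_Ioo_of_lipschitzWith (hv : LipschitzWith K v) {f g : ℝ → E} {a b t₀ : ℝ}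
    (hf : ∀ t ∈ Ioo a b, HasDerivAt f (v (f t)) t) (hg : ∀ t ∈ Ioo a b, HasDerivAt g (v (g t)) t)
    (ht₀ : t₀ ∈ Ioo a b) (h : f t₀ = g t₀) : EqOn f g (Ioo a b) :=
  ODE_solution_unique_of_mem_Ioo (s := fun _ ↦ univ) (fun _ _ ↦ hv.lipschitzOnWith) ht₀
    (fun t ht ↦ ⟨hf t ht, mem_univ _⟩) (fun t ht ↦ ⟨hg t ht, mem_univ _⟩) h

theorem eqOn_Icc_of_lipschitzWith (hv : LipschitzWith K v) {f g : ℝ → E} {a b t₀ : ℝ}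
    (hf : ∀ t ∈ Icc a b, HasDerivAt f (v (f t)) t) (hg : ∀ t ∈ Icc a b, HasDerivAt g (v (g t)) t)
    (ht₀ : t₀ ∈ Icc a b) (h : f t₀ = g t₀) : EqOn f g (Icc a b) := by
  have hfc := HasDerivAt.continuousOn hf
  have hgc := HasDerivAt.continuousOn hg
  intro t ht
  rcases le_total t t₀ with htt₀ | htt₀
  · have hsub : Icc a t₀ ⊆ Icc a b := Icc_subset_Icc_right ht₀.2
    exact ODE_solution_unique_of_mem_Icc_left (s := fun _ ↦ univ)
      (fun _ _ ↦ hv.lipschitzOnWith) (hfc.mono hsub)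
      (fun s hs ↦ (hf s (hsub (Ioc_subset_Icc_self hs))).hasDerivWithinAt) (fun _ _ ↦ mem_univ _)
      (hgc.mono hsub) (fun s hs ↦ (hg s (hsub (Ioc_subset_Icc_self hs))).hasDerivWithinAt)
      (fun _ _ ↦ mem_univ _) h ⟨ht.1, htt₀⟩
  · have hsub : Icc t₀ b ⊆ Icc a b := Icc_subset_Icc_left ht₀.1
    exact ODE_solution_unique_of_mem_Icc_right (s := fun _ ↦ univ)
      (fun _ _ ↦ hv.lipschitzOnWith) (hfc.mono hsub)
      (fun s hs ↦ (hf s (hsub (Ico_subset_Icc_self hs))).hasDerivWithinAt) (fun _ _ ↦ mem_univ _)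
      (hgc.mono hsub) (fun s hs ↦ (hg s (hsub (Ico_subset_Icc_self hs))).hasDerivWithinAt)
      (fun _ _ ↦ mem_univ _) h ⟨htt₀, ht.2⟩

theorem exists_hasDerivAt_union {f g : ℝ → E} {I J : Set ℝ} (hI : IsOpen I) (hJ : IsOpen J)
    (hf : ∀ t ∈ I, HasDerivAt f (v (f t)) t) (hg : ∀ t ∈ J, HasDerivAt g (v (g t)) t)
    (hfg : EqOn f g (I ∩ J)) :
    ∃ h : ℝ → E, EqOn h f I ∧ ∀ t ∈ I ∪ J, HasDerivAt h (v (h t)) t := by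
  classical
  have hhf : EqOn (I.piecewise f g) f I := fun t ht ↦ piecewise_eq_of_mem _ _ _ ht
  have hhg : EqOn (I.piecewise f g) g J := fun t ht ↦ by
    by_cases htI : t ∈ I
    · rw [piecewise_eq_of_mem _ _ _ htI, hfg ⟨htI, ht⟩]
    · exact piecewise_eq_of_notMem _ _ _ htI
  refine ⟨I.piecewise f g, hhf, ?_⟩
  rintro t (ht | ht)
  · rw [hhf ht]
    exact (hf t ht).congr_of_eventuallyEq (hhf.eventuallyEq_of_mem (hI.mem_nhds ht))
  · rw [hhg ht]
    exact (hg t ht).congr_of_eventuallyEq (hhg.eventuallyEq_of_mem (hJ.mem_nhds ht))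

variable [CompleteSpace E]

theorem exists_hasDerivAt_union_Ioo (hv : LipschitzWith K v) {ε : ℝ} (hε : 0 < ε)
    (hKε : K * ε ≤ 1 / 2) {f : ℝ → E} {a b t₁ : ℝ} (hf : ∀ t ∈ Ioo a b, HasDerivAt f (v (f t)) t)
    (ht₁ : t₁ ∈ Ioo a b) :
    ∃ g : ℝ → E, EqOn g f (Ioo a b) ∧
      ∀ t ∈ Ioo a b ∪ Ioo (t₁ - ε) (t₁ + ε), HasDerivAt g (v (g t)) t := by
  obtain ⟨p, hp₁, hp⟩ := exists_hasDerivAt_Ioo_of_lipschitzWith hv hε hKε t₁ (f t₁)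
  refine exists_hasDerivAt_union isOpen_Ioo isOpen_Ioo hf hp ?_
  rw [Ioo_inter_Ioo]
  exact eqOn_Ioo_of_lipschitzWith hv
    (fun t ht ↦ hf t ⟨(le_max_left _ _).trans_lt ht.1, ht.2.trans_le (min_le_left _ _)⟩)
    (fun t ht ↦ hp t ⟨(le_max_right _ _).trans_lt ht.1, ht.2.trans_le (min_le_right _ _)⟩)
    ⟨max_lt ht₁.1 (by linarith), lt_min ht₁.2 (by linarith)⟩ hp₁.symm

theorem exists_hasDerivAt_Ioo_add (hv : LipschitzWith K v) {ε : ℝ} (hε : 0 < ε)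
    (hKε : K * ε ≤ 1 / 2) {f : ℝ → E} {x₀ : E} {T : ℝ} (hT : ε ≤ T) (hf₀ : f 0 = x₀)
    (hf : ∀ t ∈ Ioo (-T) T, HasDerivAt f (v (f t)) t) :
    ∃ g : ℝ → E, g 0 = x₀ ∧ ∀ t ∈ Ioo (-(T + ε / 2)) (T + ε / 2), HasDerivAt g (v (g t)) t := by
  obtain ⟨g, hgf, hg⟩ := exists_hasDerivAt_union_Ioo hv hε hKε hf
    (t₁ := T - ε / 2) ⟨by linarith, by linarith⟩
  obtain ⟨h, hhg, hh⟩ := exists_hasDerivAt_union_Ioo hv hε hKε (a := -T) (b := T + ε / 2)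
    (fun t ht ↦ hg t (by
      rcases lt_or_ge t T with htT | htT
      · exact Or.inl ⟨ht.1, htT⟩
      · exact Or.inr ⟨by linarith, by linarith [ht.2]⟩))
    (t₁ := -T + ε / 2) ⟨by linarith, by linarith⟩
  have h0 : (0 : ℝ) ∈ Ioo (-T) T := ⟨by linarith, by linarith⟩
  refine ⟨h, by rw [hhg ⟨h0.1, by linarith⟩, hgf h0, hf₀], fun t ht ↦ hh t ?_⟩
  rcases lt_or_ge (-T) t with htT | htT
  · exact Or.inl ⟨htT, ht.2⟩
  · exact Or.inr ⟨by linarith [ht.1], by linarith⟩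

theorem exists_hasDerivAt_Ioo_symm_of_lipschitzWith (hv : LipschitzWith K v) (x₀ : E) (T : ℝ) :
    ∃ f : ℝ → E, f 0 = x₀ ∧ ∀ t ∈ Ioo (-T) T, HasDerivAt f (v (f t)) t := by
  -- the local existence time `ε` depends only on `K`, so solutions extend by `ε / 2` at a time
  set ε : ℝ := (2 * (K + 1))⁻¹
  have hε : 0 < ε := by positivity
  have hKε : K * ε ≤ 1 / 2 := by
    rw [← div_eq_mul_inv, div_le_iff₀ (by positivity)]
    linarith
  have hN : ∀ N : ℕ, ∃ f : ℝ → E, f 0 = x₀ ∧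
      ∀ t ∈ Ioo (-(ε + N * (ε / 2))) (ε + N * (ε / 2)), HasDerivAt f (v (f t)) t := by
    intro N
    induction N with
    | zero => simpa using exists_hasDerivAt_Ioo_of_lipschitzWith hv hε hKε 0 x₀
    | succ N ih =>
      obtain ⟨f, hf₀, hf⟩ := ih
      have hT : ε ≤ ε + N * (ε / 2) := le_add_of_nonneg_right (by positivity)
      obtain ⟨g, hg₀, hg⟩ := exists_hasDerivAt_Ioo_add hv hε hKε hT hf₀ hf
      refine ⟨g, hg₀, fun t ht ↦ hg t ?_⟩
      push_cast at ht
      constructor <;> linarith [ht.1, ht.2]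
  obtain ⟨N, hN'⟩ := exists_nat_ge (T / (ε / 2))
  obtain ⟨f, hf₀, hf⟩ := hN N
  have hT : T ≤ ε + N * (ε / 2) := by
    rw [div_le_iff₀ (by positivity)] at hN'
    linarith
  exact ⟨f, hf₀, fun t ht ↦ hf t ⟨by linarith [ht.1], by linarith [ht.2]⟩⟩

theorem exists_forall_hasDerivAt_of_lipschitzWith (hv : LipschitzWith K v) (x₀ : E) :
    ∃ γ : ℝ → E, γ 0 = x₀ ∧ ∀ t, HasDerivAt γ (v (γ t)) t := by
  choose F hF₀ hF using exists_hasDerivAt_Ioo_symm_of_lipschitzWith hv x₀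
  have hmem : ∀ t : ℝ, t ∈ Ioo (-(|t| + 1)) (|t| + 1) := fun t ↦ abs_lt.mp (lt_add_one _)
  have hagree : ∀ T, ∀ t ∈ Ioo (-T) T, F (|t| + 1) t = F T t := by
    intro T t ht
    have hm : ∀ S, min (|t| + 1) T ≤ S → Ioo (-min (|t| + 1) T) (min (|t| + 1) T) ⊆ Ioo (-S) S :=
      fun S hS ↦ Ioo_subset_Ioo (neg_le_neg hS) hS
    refine eqOn_Ioo_of_lipschitzWith hv (fun s hs ↦ hF _ s (hm _ (min_le_left _ _) hs))
      (fun s hs ↦ hF _ s (hm _ (min_le_right _ _) hs)) (t₀ := 0) ?_ (by rw [hF₀, hF₀]) ?_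
    · have : 0 < min (|t| + 1) T := lt_min (by positivity) (by linarith [ht.1, ht.2])
      exact ⟨by linarith, this⟩
    · exact ⟨neg_lt.mpr (lt_min (by linarith [(hmem t).1]) (by linarith [ht.1])),
        lt_min (hmem t).2 ht.2⟩
  refine ⟨fun t ↦ F (|t| + 1) t, hF₀ _, fun t ↦ ?_⟩
  exact (hF _ t (hmem t)).congr_of_eventuallyEq
    (eventually_of_mem (isOpen_Ioo.mem_nhds (hmem t)) (hagree _))

end LipschitzODE

theorem Continuous.forall_nonneg_mem_of_Icc_closure {α : Type*} [TopologicalSpace α]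
    {γ : ℝ → α} (hγ : Continuous γ) {O : Set α} (hO : IsOpen O) (h₀ : γ 0 ∈ O)
    (h : ∀ t ≥ 0, (∀ s ∈ Icc 0 t, γ s ∈ closure O) → γ t ∈ O) : ∀ t ≥ 0, γ t ∈ O := by
  by_contra! hexit
  obtain ⟨t, ht, htO⟩ := hexit
  -- the first exit time `T` from `O`
  set B := Ici (0 : ℝ) ∩ γ ⁻¹' Oᶜ
  have hBbdd : BddBelow B := ⟨0, fun s hs ↦ hs.1⟩
  have hTB : sInf B ∈ B :=
    (isClosed_Ici.inter (hO.isClosed_compl.preimage hγ)).csInf_mem ⟨t, ht, htO⟩ hBbdd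
  set T := sInf B
  have hT : (0 : ℝ) ≠ T := fun h0 ↦ hTB.2 (h0 ▸ h₀)
  have hbefore : MapsTo γ (Ico 0 T) O := fun s hs ↦ by
    by_contra hsO
    exact notMem_of_lt_csInf hs.2 hBbdd ⟨hs.1, hsO⟩
  exact hTB.2 (h T hTB.1 fun s hs ↦ map_mem_closure hγ (by rwa [closure_Ico hT]) hbefore)

theorem Continuous.forall_mem_of_uIcc_closure {α : Type*} [TopologicalSpace α]
    {γ : ℝ → α} (hγ : Continuous γ) {O : Set α} (hO : IsOpen O) (h₀ : γ 0 ∈ O)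
    (h : ∀ t, (∀ s ∈ uIcc 0 t, γ s ∈ closure O) → γ t ∈ O) (t : ℝ) : γ t ∈ O := by
  rcases le_total 0 t with ht | ht
  · exact hγ.forall_nonneg_mem_of_Icc_closure hO h₀
      (fun t ht hcl ↦ h t (by rwa [uIcc_of_le ht])) t ht
  · have hback := (hγ.comp continuous_neg).forall_nonneg_mem_of_Icc_closure hO (by simpa using h₀)
      fun t ht hcl ↦ h (-t) fun s hs ↦ by
        rw [uIcc_of_ge (neg_nonpos.2 ht)] at hs
        simpa using hcl (-s) ⟨by linarith [hs.2], by linarith [hs.1]⟩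
    simpa using hback (-t) (neg_nonneg.2 ht)

section IntegralCurves

variable {n : ℕ} {F : EuclideanSpace ℝ (Fin n) → EuclideanSpace ℝ (Fin n)}
  {K A : Set (EuclideanSpace ℝ (Fin n))}

theorem relOf_of_forall_mem_uIcc {γ : ℝ → EuclideanSpace ℝ (Fin n)} {s t : ℝ}
    (h : ∀ τ ∈ uIcc s t, γ τ ∈ K ∧ HasDerivAt γ (F (γ τ)) τ) : relOf F K (γ s) (γ t) := by
  have hs : s - s ⊓ t ∈ Icc 0 (s ⊔ t - s ⊓ t) :=
    ⟨sub_nonneg.2 inf_le_left, sub_le_sub_right le_sup_left _⟩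
  have ht : t - s ⊓ t ∈ Icc 0 (s ⊔ t - s ⊓ t) :=
    ⟨sub_nonneg.2 inf_le_right, sub_le_sub_right le_sup_right _⟩
  refine ⟨s ⊔ t - s ⊓ t, fun τ ↦ γ (τ + s ⊓ t), sub_nonneg.2 inf_le_sup, fun τ hτ ↦ ?_,
    ⟨_, hs, by simp⟩, ⟨_, ht, by simp⟩⟩
  have hτ' : τ + s ⊓ t ∈ uIcc s t := ⟨by linarith [hτ.1], by linarith [hτ.2]⟩
  exact ⟨(h _ hτ').1, (h _ hτ').2.comp_add_const τ _⟩

theorem sigmaOf_subset : SigmaOf F K A ⊆ K := by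
  rintro y ⟨x, -, b, σ, -, hσ, ⟨s, hs, rfl⟩, -⟩
  exact (hσ s hs).1

theorem sigmaOf_subset_interior {Ω : Set (EuclideanSpace ℝ (Fin n))}
    (h : SigmaOf F (closure Ω) A ∩ frontier Ω = ∅) : SigmaOf F (closure Ω) A ⊆ interior Ω :=
  fun y hy ↦ by
    by_contra hyΩ
    exact (eq_empty_iff_forall_notMem.1 h) y ⟨hy, sigmaOf_subset hy, hyΩ⟩

theorem mem_sigmaOf_of_forall_mem_uIcc {Y : EuclideanSpace ℝ (Fin n) → EuclideanSpace ℝ (Fin n)}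
    {L : ℝ≥0} (hY : LipschitzWith L Y) (hFY : EqOn F Y K) {γ : ℝ → EuclideanSpace ℝ (Fin n)}
    (hγ : ∀ t, HasDerivAt γ (Y (γ t)) t) (h₀ : γ 0 ∈ SigmaOf F K A) {t : ℝ}
    (ht : ∀ s ∈ uIcc 0 t, γ s ∈ K) : γ t ∈ SigmaOf F K A := by
  obtain ⟨u, hu, b, σ, -, hσ, ⟨s₁, hs₁, hσx⟩, ⟨s₂, hs₂, rfl⟩⟩ := h₀
  have hσγ : EqOn σ (fun τ ↦ γ (τ - s₁)) (Icc 0 b) :=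
    eqOn_Icc_of_lipschitzWith hY (fun τ hτ ↦ hFY (hσ τ hτ).1 ▸ (hσ τ hτ).2)
      (fun τ _ ↦ (hγ _).comp_sub_const τ s₁) hs₁ (by simp [hσx])
  have hσK : ∀ τ ∈ uIcc 0 (s₂ - s₁), γ τ ∈ K := fun τ hτ ↦ by
    have hτ' : τ ∈ Icc (-s₁) (b - s₁) :=
      uIcc_subset_Icc ⟨by linarith [hs₁.1], by linarith [hs₁.2]⟩
        ⟨by linarith [hs₂.1], by linarith [hs₂.2]⟩ hτ
    have hτb : τ + s₁ ∈ Icc 0 b := ⟨by linarith [hτ'.1], by linarith [hτ'.2]⟩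
    simpa [hσγ hτb] using (hσ _ hτb).1
  refine ⟨σ s₂, hu, ?_⟩
  rw [show σ s₂ = γ (s₂ - s₁) from hσγ hs₂]
  refine relOf_of_forall_mem_uIcc fun τ hτ ↦ ?_
  have hτK : γ τ ∈ K := by
    rcases uIcc_subset_uIcc_union_uIcc (b := 0) hτ with hτ | hτ
    · exact ht τ (uIcc_comm t 0 ▸ hτ)
    · exact hσK τ hτ
  exact ⟨hτK, hFY hτK ▸ hγ τ⟩

end IntegralCurves

theorem stmt_13_general {n : ℕ} (Ω : Set (EuclideanSpace ℝ (Fin n)))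
    (X : EuclideanSpace ℝ (Fin n) → EuclideanSpace ℝ (Fin n))
    (hX : ∃ L, LipschitzOnWith L X (closure Ω))
    (U : Set (EuclideanSpace ℝ (Fin n)))
    (hdisj : SigmaOf X (closure Ω) U ∩ frontier Ω = ∅) :
    SigmaOf X (closure Ω) U ⊆ Ω ∧
    ∀ x ∈ SigmaOf X (closure Ω) U, ∃ γ : ℝ → EuclideanSpace ℝ (Fin n),
      γ 0 = x ∧ ∀ t : ℝ, γ t ∈ SigmaOf X (closure Ω) U ∧ HasDerivAt γ (X (γ t)) t := by
  obtain ⟨L, hL⟩ := hX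
  obtain ⟨Y, hY, hXY⟩ := hL.extend_finite_dimension
  have hint := sigmaOf_subset_interior hdisj
  refine ⟨hint.trans interior_subset, fun x hx ↦ ?_⟩
  obtain ⟨γ, hγ₀, hγ⟩ := exists_forall_hasDerivAt_of_lipschitzWith hY x
  have hmem : ∀ t, (∀ s ∈ uIcc 0 t, γ s ∈ closure Ω) → γ t ∈ SigmaOf X (closure Ω) U :=
    fun t ↦ mem_sigmaOf_of_forall_mem_uIcc hY hXY hγ (hγ₀ ▸ hx)
  have hin : ∀ t, γ t ∈ interior Ω :=
    (continuous_iff_continuousAt.2 fun t ↦ (hγ t).continuousAt).forall_mem_of_uIcc_closure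
      isOpen_interior (hγ₀ ▸ hint hx)
      fun t ht ↦ hint (hmem t fun s hs ↦ closure_mono interior_subset (ht s hs))
  have hcl : ∀ t, γ t ∈ closure Ω := fun t ↦ subset_closure (interior_subset (hin t))
  exact ⟨γ, hγ₀, fun t ↦ ⟨hmem t fun s _ ↦ hcl s, hXY (hcl t) ▸ hγ t⟩⟩

/-- if no integral curve of `X` joins `U` to `∂Ω`, then `Σ_U ⊆ Ω` and `Σ_U` is
invariant under the flow of `X` for all time: through each point of `Σ_U` there is a global
integral curve staying in `Σ_U`. -/
theorem stmt_13 {n : ℕ} (Ω : Set (EuclideanSpace ℝ (Fin n)))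
    (hΩ : IsOpen Ω) (hΩb : Bornology.IsBounded Ω)
    (X : EuclideanSpace ℝ (Fin n) → EuclideanSpace ℝ (Fin n))
    (hX : ∃ L, LipschitzOnWith L X (closure Ω))
    (U : Set (EuclideanSpace ℝ (Fin n))) (hU : IsOpen U) (hUΩ : U ⊆ Ω)
    (hdisj : SigmaOf X (closure Ω) U ∩ frontier Ω = ∅) :
    SigmaOf X (closure Ω) U ⊆ Ω ∧
    ∀ x ∈ SigmaOf X (closure Ω) U, ∃ γ : ℝ → EuclideanSpace ℝ (Fin n),
      γ 0 = x ∧ ∀ t : ℝ, γ t ∈ SigmaOf X (closure Ω) U ∧ HasDerivAt γ (X (γ t)) t :=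
  stmt_13_general Ω X hX U hdisj
end
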